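/- Let F : ℝ^d → ℝ^d be such that ⟨F(y) − F(x), y − x⟩ ≥ 0 for all x, y ∈ ℝ^d, and let the initial velocity field v : Λ → ℝ^d satisfy ⟨v(x₂) − v(x₁), x₂ − x₁⟩ ≥ 0 for all x₁, x₂ ∈ Λ. Then there are no collisions on [0,∞): y(t,x₁) ≠ y(t,x₂) for all t ≥ 0 and all x₁ ≠ x₂ in Λ. -/

import Mathlib

open Set
open scoped RealInnerProductSpace

/-!
For two particles, let `u = y(·,x₂) - y(·,x₁)` be their separation. Monotonicity of `F` gives
`⟪u'', u⟫ ≥ 0`, so `⟪u', u⟫` has derivative `‖u'‖² + ⟪u'', u⟫ ≥ 0`; being nonnegative at `t = 0`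
by monotonicity of `v`, it stays nonnegative. Hence `‖u‖²`, whose derivative is `2 ⟪u', u⟫`,
never decreases from its positive initial value `‖x₂ - x₁‖²`.
-/

theorem monotoneOn_Ici_of_hasDerivAt_nonneg {f f' : ℝ → ℝ} {a : ℝ}
    (hf : ∀ s ∈ Ici a, HasDerivAt f (f' s) s) (hf' : ∀ s ∈ Ici a, 0 ≤ f' s) :
    MonotoneOn f (Ici a) :=
  monotoneOn_of_hasDerivWithinAt_nonneg (convex_Ici a)
    (fun s hs => (hf s hs).continuousAt.continuousWithinAt)
    (fun s hs => (hf s (interior_subset hs)).hasDerivWithinAt)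
    (fun s hs => hf' s (interior_subset hs))

section SecondOrderCurve

variable {E : Type*} [NormedAddCommGroup E] [InnerProductSpace ℝ E] {u w a : ℝ → E} {t₀ : ℝ}

theorem inner_deriv_self_nonneg_of_inner_accel_nonneg
    (hu : ∀ s ∈ Ici t₀, HasDerivAt u (w s) s) (hw : ∀ s ∈ Ici t₀, HasDerivAt w (a s) s)
    (ha : ∀ s ∈ Ici t₀, 0 ≤ ⟪a s, u s⟫) (h₀ : 0 ≤ ⟪w t₀, u t₀⟫) :
    ∀ s ∈ Ici t₀, 0 ≤ ⟪w s, u s⟫ := by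
  have hmono : MonotoneOn (fun s => ⟪w s, u s⟫) (Ici t₀) :=
    monotoneOn_Ici_of_hasDerivAt_nonneg (fun s hs => (hw s hs).inner ℝ (hu s hs))
      (fun s hs => add_nonneg real_inner_self_nonneg (ha s hs))
  exact fun s hs => h₀.trans (hmono self_mem_Ici hs hs)

theorem monotoneOn_norm_sq_of_inner_accel_nonneg
    (hu : ∀ s ∈ Ici t₀, HasDerivAt u (w s) s) (hw : ∀ s ∈ Ici t₀, HasDerivAt w (a s) s)
    (ha : ∀ s ∈ Ici t₀, 0 ≤ ⟪a s, u s⟫) (h₀ : 0 ≤ ⟪w t₀, u t₀⟫) :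
    MonotoneOn (fun s => ‖u s‖ ^ 2) (Ici t₀) := by
  have hwu := inner_deriv_self_nonneg_of_inner_accel_nonneg hu hw ha h₀
  refine monotoneOn_Ici_of_hasDerivAt_nonneg (fun s hs => (hu s hs).norm_sq) fun s hs => ?_
  rw [real_inner_comm]
  exact mul_nonneg zero_le_two (hwu s hs)

theorem ne_zero_of_inner_accel_nonneg
    (hu : ∀ s ∈ Ici t₀, HasDerivAt u (w s) s) (hw : ∀ s ∈ Ici t₀, HasDerivAt w (a s) s)
    (ha : ∀ s ∈ Ici t₀, 0 ≤ ⟪a s, u s⟫) (h₀ : 0 ≤ ⟪w t₀, u t₀⟫) (hu₀ : u t₀ ≠ 0) :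
    ∀ s ∈ Ici t₀, u s ≠ 0 := by
  intro s hs hus
  have hle := monotoneOn_norm_sq_of_inner_accel_nonneg hu hw ha h₀ self_mem_Ici hs hs
  simp only [hus, norm_zero] at hle
  have : 0 < ‖u t₀‖ ^ 2 := by positivity
  linarith

end SecondOrderCurve

theorem no_collisions_of_monotone_force_multidim
    {d : ℕ}
    (F v : EuclideanSpace ℝ (Fin d) → EuclideanSpace ℝ (Fin d))
    (Λ : Set (EuclideanSpace ℝ (Fin d)))
    (y y' : EuclideanSpace ℝ (Fin d) → ℝ → EuclideanSpace ℝ (Fin d))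
    (hF_mono : ∀ x z : EuclideanSpace ℝ (Fin d), 0 ≤ ⟪F z - F x, z - x⟫)
    (hv_mono : ∀ x₁ ∈ Λ, ∀ x₂ ∈ Λ, 0 ≤ ⟪v x₂ - v x₁, x₂ - x₁⟫)
    (hy0 : ∀ x ∈ Λ, y x 0 = x)
    (hy0' : ∀ x ∈ Λ, y' x 0 = v x)
    (hode1 : ∀ x ∈ Λ, ∀ t, 0 ≤ t → HasDerivAt (y x) (y' x t) t)
    (hode2 : ∀ x ∈ Λ, ∀ t, 0 ≤ t → HasDerivAt (y' x) (F (y x t)) t) :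
    ∀ t, 0 ≤ t → ∀ x₁ ∈ Λ, ∀ x₂ ∈ Λ, x₁ ≠ x₂ → y x₁ t ≠ y x₂ t := by
  intro t ht x₁ h₁ x₂ h₂ hne
  have hsep := ne_zero_of_inner_accel_nonneg (u := fun s => y x₂ s - y x₁ s)
    (fun s hs => (hode1 x₂ h₂ s hs).sub (hode1 x₁ h₁ s hs))
    (fun s hs => (hode2 x₂ h₂ s hs).sub (hode2 x₁ h₁ s hs))
    (fun s _ => hF_mono (y x₁ s) (y x₂ s))
    (by simpa only [hy0 _ h₁, hy0 _ h₂, hy0' _ h₁, hy0' _ h₂] using hv_mono x₁ h₁ x₂ h₂)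
    (by simpa only [hy0 _ h₁, hy0 _ h₂, sub_ne_zero] using hne.symm) t ht
  exact fun heq => hsep (by simp only [heq, sub_self])
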